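/- arXiv:2004.07605 — 2 statements merged into one kernel-verified Lean document; each statement's English description precedes it below -/
import Mathlib

section
/- Margin form of the C-bound: if the first margin moment is positive, μ₁(M_Q^D) > 0, then the risk of the Q-weighted majority vote satisfies R_D(B_Q) ≤ 1 - (μ₁(M_Q^D))² / μ₂(M_Q^D), where μ₁(M_Q^D) and μ₂(M_Q^D) are the first and second D-moments of the margin (note μ₂ ≥ μ₁² > 0, so the right-hand side is well defined). -/
/-!
The majority vote errs exactly where the margin `M(x, y) = y · ∫ h(x) dQ` is `≤ 0`, so the C-bound
is a fact about any real random variable `M` with `E M > 0`. Since `M ≤ 0` off `S = {M > 0}`,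
Cauchy–Schwarz on `S` gives `(E M)² ≤ (E[M; S])² ≤ P(S) · E M²`, and `P(S) = 1 - P(M ≤ 0)`.
-/

open MeasureTheory

section

variable {α : Type*} [MeasurableSpace α]

theorem sq_integral_le_measureReal_univ_mul_integral_sq {μ : Measure α} [IsFiniteMeasure μ]
    {f : α → ℝ} (hf : Integrable f μ) (hf2 : Integrable (fun x => f x ^ 2) μ) :
    (∫ x, f x ∂μ) ^ 2 ≤ μ.real Set.univ * ∫ x, f x ^ 2 ∂μ := by
  have hquad : ∀ t : ℝ, 0 ≤ (∫ x, f x ^ 2 ∂μ) * (t * t) + 2 * (∫ x, f x ∂μ) * t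
      + μ.real Set.univ := fun t =>
    calc 0 ≤ ∫ x, (t * f x + 1) ^ 2 ∂μ := integral_nonneg fun x => sq_nonneg _
      _ = ∫ x, (t ^ 2 * f x ^ 2 + 2 * t * f x + 1) ∂μ := by congr with x; ring
      _ = _ := by
        rw [integral_add (f := fun x => t ^ 2 * f x ^ 2 + 2 * t * f x)
          ((hf2.const_mul _).add (hf.const_mul _)) (integrable_const 1),
          integral_add (hf2.const_mul _) (hf.const_mul _), integral_const_mul,
          integral_const_mul, integral_const, smul_eq_mul, mul_one]
        ring
  have := discrim_le_zero hquad
  unfold discrim at this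
  linarith

theorem sq_integral_le_measureReal_pos_mul_integral_sq {μ : Measure α} [IsFiniteMeasure μ]
    {f : α → ℝ} (hf : Integrable f μ) (hf2 : Integrable (fun x => f x ^ 2) μ)
    (h0 : 0 ≤ ∫ x, f x ∂μ) :
    (∫ x, f x ∂μ) ^ 2 ≤ μ.real {x | 0 < f x} * ∫ x, f x ^ 2 ∂μ := by
  set S := {x | 0 < f x}
  have hS : NullMeasurableSet S μ := nullMeasurableSet_lt aemeasurable_const hf.1.aemeasurable
  have hSc : ∫ x in Sᶜ, f x ∂μ ≤ 0 :=
    setIntegral_nonpos_of_ae_restrict <| (ae_restrict_iff'₀ hS.compl).2 <|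
      ae_of_all _ fun x hx => not_lt.1 hx
  have hle : ∫ x, f x ∂μ ≤ ∫ x in S, f x ∂μ := by
    linarith [integral_add_compl₀ hS hf]
  calc (∫ x, f x ∂μ) ^ 2 ≤ (∫ x in S, f x ∂μ) ^ 2 := pow_le_pow_left₀ h0 hle 2
    _ ≤ (μ.restrict S).real Set.univ * ∫ x in S, f x ^ 2 ∂μ :=
      sq_integral_le_measureReal_univ_mul_integral_sq hf.restrict hf2.restrict
    _ ≤ μ.real S * ∫ x, f x ^ 2 ∂μ := by
      rw [measureReal_restrict_apply_univ]
      exact mul_le_mul_of_nonneg_left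
        (setIntegral_le_integral hf2 (ae_of_all _ fun x => sq_nonneg _)) measureReal_nonneg

theorem measureReal_nonpos_le_one_sub_sq_integral_div_integral_sq {μ : Measure α} [IsProbabilityMeasure μ]
    {f : α → ℝ} (hpos : 0 < ∫ x, f x ∂μ) :
    μ.real {x | f x ≤ 0} ≤ 1 - (∫ x, f x ∂μ) ^ 2 / ∫ x, f x ^ 2 ∂μ := by
  have hf : Integrable f μ := Integrable.of_integral_ne_zero hpos.ne'
  by_cases hf2 : Integrable (fun x => f x ^ 2) μ
  swap
  · -- the junk value `∫ f ^ 2 = 0` turns the bound into `P(f ≤ 0) ≤ 1`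
    rw [integral_undef hf2, div_zero, sub_zero]
    exact measureReal_le_one
  have hCS := sq_integral_le_measureReal_pos_mul_integral_sq hf hf2 hpos.le
  have hcompl : μ.real {x | f x ≤ 0} = 1 - μ.real {x | 0 < f x} := by
    rw [← probReal_compl_eq_one_sub₀ (nullMeasurableSet_lt aemeasurable_const hf.1.aemeasurable)]
    simp only [Set.compl_ofPred, not_lt]
  have hb : 0 < ∫ x, f x ^ 2 ∂μ :=
    pos_of_mul_pos_right ((pow_pos hpos 2).trans_le hCS) measureReal_nonneg
  rw [hcompl]
  exact sub_le_sub_left ((div_le_iff₀ hb).2 hCS) 1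

end

theorem cBound_margin_form_general {X H : Type*} [MeasurableSpace X] [MeasurableSpace H]
    (D : Measure (X × ℝ)) [IsProbabilityMeasure D]
    (ev : H × X → ℝ)
    (Q : Measure H)
    (hμ₁ : 0 < ∫ p, ∫ h, p.2 * ev (h, p.1) ∂Q ∂D) :
    (D {p | p.2 * ∫ h, ev (h, p.1) ∂Q ≤ 0}).toReal ≤
      1 - (∫ p, ∫ h, p.2 * ev (h, p.1) ∂Q ∂D) ^ 2 /
        ∫ p, (∫ h, p.2 * ev (h, p.1) ∂Q) ^ 2 ∂D := by
  simp_rw [integral_const_mul] at hμ₁ ⊢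
  exact measureReal_nonpos_le_one_sub_sq_integral_div_integral_sq hμ₁

/-- Margin form of the C-bound: if the first margin moment `μ₁(M_Q^D)` is positive,
then the risk of the `Q`-weighted majority vote (ties counted as errors) satisfies
`R_D(B_Q) ≤ 1 - μ₁² / μ₂`. -/
theorem cBound_margin_form {X H : Type*} [MeasurableSpace X] [MeasurableSpace H]
    (D : Measure (X × ℝ)) [IsProbabilityMeasure D]
    (hD : ∀ᵐ p ∂D, p.2 = 1 ∨ p.2 = -1)
    (ev : H × X → ℝ) (hev_meas : Measurable ev)
    (hev : ∀ h x, ev (h, x) = 1 ∨ ev (h, x) = -1)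
    (Q : Measure H) [IsProbabilityMeasure Q]
    (hμ₁ : 0 < ∫ p, ∫ h, p.2 * ev (h, p.1) ∂Q ∂D) :
    (D {p | p.2 * ∫ h, ev (h, p.1) ∂Q ≤ 0}).toReal ≤
      1 - (∫ p, ∫ h, p.2 * ev (h, p.1) ∂Q ∂D) ^ 2 /
        ∫ p, (∫ h, p.2 * ev (h, p.1) ∂Q) ^ 2 ∂D :=
  cBound_margin_form_general D ev Q hμ₁
end

section
/- PAC-Bayesian C-bound: if the Gibbs risk satisfies R_D(G_Q) < 1/2, then the expected disagreement satisfies d_D(Q) < 1/2 and the risk of the Q-weighted majority vote satisfies R_D(B_Q) ≤ 1 - (1 - 2·R_D(G_Q))² / (1 - 2·d_D(Q)). -/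
/-!
Write `M(x, y) = y · ∫ h(x) dQ(h)` for the margin of the vote. Since labels and votes are `±1`,
`I[a ≠ c] = (1 - a c) / 2`, so the Gibbs risk is `(1 - E[M]) / 2` and, using `y² = 1`, the
disagreement is `(1 - E[M²]) / 2`. The hypothesis says `E[M] > 0`, hence `E[M²] ≥ E[M]² > 0`.
The bound is then Cantelli's inequality `P(M ≤ 0) ≤ 1 - E[M]² / E[M²]`, obtained by integrating
`I[M ≤ 0] ≤ (1 - t M)²` with the optimal `t = E[M] / E[M²]`.
-/

open MeasureTheory ProbabilityTheory

section Cantelli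

variable {Ω : Type*} [MeasurableSpace Ω] {μ : Measure Ω} [IsProbabilityMeasure μ] {M : Ω → ℝ}

lemma sq_integral_le_integral_sq (hM : MemLp M 2 μ) : (∫ ω, M ω ∂μ) ^ 2 ≤ ∫ ω, M ω ^ 2 ∂μ := by
  have h := variance_nonneg M μ
  rw [variance_eq_sub hM] at h
  simpa using h

lemma measureReal_setOf_nonpos_le_quadratic (hM : Measurable M)
    (hM2 : MemLp M 2 μ) {t : ℝ} (ht : 0 ≤ t) :
    μ.real {ω | M ω ≤ 0} ≤ 1 - 2 * t * ∫ ω, M ω ∂μ + t ^ 2 * ∫ ω, M ω ^ 2 ∂μ := by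
  have hs : MeasurableSet {ω | M ω ≤ 0} := measurableSet_le hM measurable_const
  have hM1 : Integrable M μ := hM2.integrable one_le_two
  have hpoint : ∀ ω, {ω | M ω ≤ 0}.indicator 1 ω ≤ (1 - t * M ω) ^ 2 := by
    intro ω
    by_cases hω : M ω ≤ 0
    · rw [Set.indicator_of_mem (show ω ∈ {ω | M ω ≤ 0} from hω), Pi.one_apply]
      nlinarith [mul_nonpos_of_nonneg_of_nonpos ht hω]
    · rw [Set.indicator_of_notMem (show ω ∉ {ω | M ω ≤ 0} from hω)]
      positivity
  have hexpand : ∀ ω, (1 - t * M ω) ^ 2 = 1 - 2 * t * M ω + t ^ 2 * M ω ^ 2 := fun ω => by ring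
  have hlin : Integrable (fun ω => 1 - 2 * t * M ω) μ := (integrable_const 1).sub (hM1.const_mul _)
  have hquad : Integrable (fun ω => t ^ 2 * M ω ^ 2) μ := hM2.integrable_sq.const_mul _
  calc μ.real {ω | M ω ≤ 0} = ∫ ω, {ω | M ω ≤ 0}.indicator 1 ω ∂μ :=
        (integral_indicator_one hs).symm
    _ ≤ ∫ ω, (1 - 2 * t * M ω + t ^ 2 * M ω ^ 2) ∂μ := by
        refine integral_mono ((integrable_const 1).indicator hs) ?_ fun ω => ?_
        · exact hlin.add hquad
        · simpa only [hexpand] using hpoint ω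
    _ = 1 - 2 * t * ∫ ω, M ω ∂μ + t ^ 2 * ∫ ω, M ω ^ 2 ∂μ := by
        rw [integral_add hlin hquad, integral_sub (integrable_const 1) (hM1.const_mul _),
          integral_const_mul, integral_const_mul]
        simp

/-- Cantelli's one-sided inequality, in the form of a second-moment bound. -/
lemma measureReal_setOf_nonpos_le_one_sub_sq_integral_div (hM : Measurable M)
    (hM2 : MemLp M 2 μ) (hpos : 0 < ∫ ω, M ω ∂μ) :
    μ.real {ω | M ω ≤ 0} ≤ 1 - (∫ ω, M ω ∂μ) ^ 2 / ∫ ω, M ω ^ 2 ∂μ := by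
  set m := ∫ ω, M ω ∂μ
  set s := ∫ ω, M ω ^ 2 ∂μ
  have hs : 0 < s := (pow_pos hpos 2).trans_le (sq_integral_le_integral_sq hM2)
  calc μ.real {ω | M ω ≤ 0} ≤ 1 - 2 * (m / s) * m + (m / s) ^ 2 * s :=
        measureReal_setOf_nonpos_le_quadratic hM hM2 (div_nonneg hpos.le hs.le)
    _ = 1 - m ^ 2 / s := by field_simp; ring

end Cantelli

lemma ite_ne_eq_one_sub_mul_div_two {a c : ℝ} (ha : a = 1 ∨ a = -1) (hc : c = 1 ∨ c = -1) :
    (if a ≠ c then (1 : ℝ) else 0) = (1 - a * c) / 2 := by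
  rcases ha with rfl | rfl <;> rcases hc with rfl | rfl <;> norm_num

section SignValued

variable {α : Type*} [MeasurableSpace α] {μ : Measure α} [IsProbabilityMeasure μ] {f : α → ℝ}

lemma norm_le_one_of_eq_one_or_neg_one {a : ℝ} (ha : a = 1 ∨ a = -1) : ‖a‖ ≤ 1 := by
  rcases ha with rfl | rfl <;> simp

lemma integrable_of_forall_eq_one_or_neg_one (hf : Measurable f)
    (hf1 : ∀ a, f a = 1 ∨ f a = -1) : Integrable f μ :=
  .of_bound hf.aestronglyMeasurable 1 <|
    ae_of_all _ fun a => norm_le_one_of_eq_one_or_neg_one (hf1 a)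

lemma abs_integral_le_one_of_forall_eq_one_or_neg_one (hf1 : ∀ a, f a = 1 ∨ f a = -1) :
    |∫ a, f a ∂μ| ≤ 1 := by
  have h := norm_integral_le_of_norm_le_const (μ := μ) (C := 1) <|
    ae_of_all _ fun a => norm_le_one_of_eq_one_or_neg_one (hf1 a)
  simpa using h

lemma integral_ite_ne_eq (hf : Measurable f) (hf1 : ∀ a, f a = 1 ∨ f a = -1) {c : ℝ}
    (hc : c = 1 ∨ c = -1) :
    ∫ a, (if f a ≠ c then (1 : ℝ) else 0) ∂μ = (1 - (∫ a, f a ∂μ) * c) / 2 := by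
  simp_rw [ite_ne_eq_one_sub_mul_div_two (hf1 _) hc]
  rw [integral_div, integral_sub (integrable_const 1)
    ((integrable_of_forall_eq_one_or_neg_one hf hf1).mul_const c), integral_mul_const]
  simp

lemma integral_integral_ite_ne_eq (hf : Measurable f) (hf1 : ∀ a, f a = 1 ∨ f a = -1) :
    ∫ a', ∫ a, (if f a ≠ f a' then (1 : ℝ) else 0) ∂μ ∂μ = (1 - (∫ a, f a ∂μ) ^ 2) / 2 := by
  simp_rw [integral_ite_ne_eq hf hf1 (hf1 _)]
  rw [integral_div, integral_sub (integrable_const 1)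
    ((integrable_of_forall_eq_one_or_neg_one hf hf1).const_mul _), integral_const_mul]
  simp [sq]

end SignValued

section MajorityVote

variable {X H : Type*} [MeasurableSpace X] [MeasurableSpace H] {D : Measure (X × ℝ)}
  [IsProbabilityMeasure D] {ev : H × X → ℝ} {Q : Measure H} [IsProbabilityMeasure Q]

noncomputable def voteMargin (Q : Measure H) (ev : H × X → ℝ) (p : X × ℝ) : ℝ :=
  p.2 * ∫ h, ev (h, p.1) ∂Q

lemma measurable_voteMargin (hev_meas : Measurable ev) : Measurable (voteMargin Q ev) :=
  measurable_snd.mul (hev_meas.stronglyMeasurable.integral_prod_left'.measurable.comp measurable_fst)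

lemma memLp_voteMargin (hD : ∀ᵐ p ∂D, p.2 = 1 ∨ p.2 = -1) (hev_meas : Measurable ev)
    (hev : ∀ h x, ev (h, x) = 1 ∨ ev (h, x) = -1) : MemLp (voteMargin Q ev) 2 D := by
  refine .of_bound (measurable_voteMargin hev_meas).aestronglyMeasurable 1 ?_
  filter_upwards [hD] with p hp
  rcases hp with e | e <;>
    simpa [voteMargin, e] using
      abs_integral_le_one_of_forall_eq_one_or_neg_one (μ := Q) (hev · p.1)

lemma gibbsRisk_eq (hD : ∀ᵐ p ∂D, p.2 = 1 ∨ p.2 = -1) (hev_meas : Measurable ev)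
    (hev : ∀ h x, ev (h, x) = 1 ∨ ev (h, x) = -1) :
    ∫ p, ∫ h, (if ev (h, p.1) ≠ p.2 then (1 : ℝ) else 0) ∂Q ∂D =
      (1 - ∫ p, voteMargin Q ev p ∂D) / 2 := by
  have hM := (memLp_voteMargin (Q := Q) hD hev_meas hev).integrable one_le_two
  calc ∫ p, ∫ h, (if ev (h, p.1) ≠ p.2 then (1 : ℝ) else 0) ∂Q ∂D
      = ∫ p, (1 - voteMargin Q ev p) / 2 ∂D := by
        refine integral_congr_ae (hD.mono fun p hp => ?_)
        dsimp only
        rw [integral_ite_ne_eq (f := fun h => ev (h, p.1)) (hev_meas.comp measurable_prodMk_right)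
          (hev · p.1) hp, voteMargin, mul_comm]
    _ = (1 - ∫ p, voteMargin Q ev p ∂D) / 2 := by
        rw [integral_div, integral_sub (integrable_const 1) hM]
        simp

lemma disagreement_eq (hD : ∀ᵐ p ∂D, p.2 = 1 ∨ p.2 = -1) (hev_meas : Measurable ev)
    (hev : ∀ h x, ev (h, x) = 1 ∨ ev (h, x) = -1) :
    ∫ p, ∫ h', ∫ h, (if ev (h, p.1) ≠ ev (h', p.1) then (1 : ℝ) else 0) ∂Q ∂Q ∂D =
      (1 - ∫ p, voteMargin Q ev p ^ 2 ∂D) / 2 := by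
  have hM2 := (memLp_voteMargin (Q := Q) hD hev_meas hev).integrable_sq
  calc ∫ p, ∫ h', ∫ h, (if ev (h, p.1) ≠ ev (h', p.1) then (1 : ℝ) else 0) ∂Q ∂Q ∂D
      = ∫ p, (1 - voteMargin Q ev p ^ 2) / 2 ∂D := by
        refine integral_congr_ae (hD.mono fun p hp => ?_)
        dsimp only
        rw [integral_integral_ite_ne_eq (f := fun h => ev (h, p.1))
          (hev_meas.comp measurable_prodMk_right) (hev · p.1), voteMargin, mul_pow]
        rcases hp with e | e <;> simp [e]
    _ = (1 - ∫ p, voteMargin Q ev p ^ 2 ∂D) / 2 := by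
        rw [integral_div, integral_sub (integrable_const 1) hM2]
        simp

end MajorityVote

/-- PAC-Bayesian C-bound: if the Gibbs risk `R_D(G_Q) < 1/2`, then the expected
disagreement satisfies `d_D(Q) < 1/2` and the risk of the `Q`-weighted majority vote
(ties counted as errors) satisfies
`R_D(B_Q) ≤ 1 - (1 - 2 R_D(G_Q))² / (1 - 2 d_D(Q))`. -/
theorem pac_bayes_cBound {X H : Type*} [MeasurableSpace X] [MeasurableSpace H]
    (D : Measure (X × ℝ)) [IsProbabilityMeasure D]
    (hD : ∀ᵐ p ∂D, p.2 = 1 ∨ p.2 = -1)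
    (ev : H × X → ℝ) (hev_meas : Measurable ev)
    (hev : ∀ h x, ev (h, x) = 1 ∨ ev (h, x) = -1)
    (Q : Measure H) [IsProbabilityMeasure Q]
    (hGibbs : ∫ p, ∫ h, (if ev (h, p.1) ≠ p.2 then (1 : ℝ) else 0) ∂Q ∂D < 1 / 2) :
    ∫ p, ∫ h', ∫ h, (if ev (h, p.1) ≠ ev (h', p.1) then (1 : ℝ) else 0) ∂Q ∂Q ∂D < 1 / 2 ∧
    (D {p | p.2 * ∫ h, ev (h, p.1) ∂Q ≤ 0}).toReal ≤
      1 - (1 - 2 * ∫ p, ∫ h, (if ev (h, p.1) ≠ p.2 then (1 : ℝ) else 0) ∂Q ∂D) ^ 2 /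
        (1 - 2 * ∫ p, ∫ h', ∫ h, (if ev (h, p.1) ≠ ev (h', p.1) then (1 : ℝ) else 0) ∂Q ∂Q ∂D) := by
  have hM := memLp_voteMargin (Q := Q) hD hev_meas hev
  rw [gibbsRisk_eq hD hev_meas hev] at hGibbs ⊢
  rw [disagreement_eq hD hev_meas hev]
  have hmean : 0 < ∫ p, voteMargin Q ev p ∂D := by linarith
  have hsecond : 0 < ∫ p, voteMargin Q ev p ^ 2 ∂D :=
    (pow_pos hmean 2).trans_le (sq_integral_le_integral_sq hM)
  refine ⟨by linarith, ?_⟩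
  simp only [show ∀ a : ℝ, 1 - 2 * ((1 - a) / 2) = a from fun a => by ring]
  exact measureReal_setOf_nonpos_le_one_sub_sq_integral_div (measurable_voteMargin hev_meas) hM
    hmean
end
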